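/- Let n ≥ 3 and 1 ≤ k ≤ n−1 be integers, and let G be a simple connected graph on n vertices with edge connectivity κ′(G) ≤ k. Then Π1(G) ≥ (n−1)^2 with equality if and only if G is isomorphic to the star S_n, and Π2(G) ≥ 4^{n−2} with equality if and only if G is isomorphic to the path P_n. -/

import Mathlib

open SimpleGraph Finset

/-- Degree of a vertex (as `Nat.card` of its neighbor set). -/
noncomputable def mdeg {V : Type*} (G : SimpleGraph V) (v : V) : ℕ :=
  Nat.card (G.neighborSet v)

/-- First multiplicative Zagreb index. -/
noncomputable def mZ1 {V : Type*} [Fintype V] (G : SimpleGraph V) : ℕ :=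
  ∏ v : V, (mdeg G v) ^ 2

/-- Second multiplicative Zagreb index. -/
noncomputable def mZ2 {V : Type*} [Fintype V] (G : SimpleGraph V) : ℕ :=
  ∏ v : V, (mdeg G v) ^ (mdeg G v)

/-- The edge connectivity of `G` is at most `k`: some set of at most `k` edges of `G`
disconnects it. -/
def EdgeConnAtMost {V : Type*} (G : SimpleGraph V) (k : ℕ) : Prop :=
  ∃ F : Finset (Sym2 V), (↑F : Set (Sym2 V)) ⊆ G.edgeSet ∧ F.card ≤ k ∧
    ¬ (G.deleteEdges (↑F : Set (Sym2 V))).Connected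

/-- The star on `n` vertices, with center `0`. -/
def starGraphFin (n : ℕ) : SimpleGraph (Fin n) :=
  SimpleGraph.fromRel (fun u _ => u.val = 0)

/-!
In a connected graph on `n` vertices all degrees `dᵥ` are positive and
`∑ (dᵥ - 1) = 2|E| - n ≥ n - 2`. Bernoulli's inequality `∏ (1 + aᵥ) ≥ 1 + ∑ aᵥ` then gives
`∏ dᵥ ≥ n - 1`, and equality leaves room for only one vertex of degree above one: the star.
Since `d ^ d ≥ 4 ^ (d - 1)`, with equality exactly for `d ≤ 2`, also
`∏ dᵥ ^ dᵥ ≥ 4 ^ ∑ (dᵥ - 1) ≥ 4 ^ (n - 2)`; equality forces maximum degree two and a leaf, and the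
distance from that leaf identifies the graph with the path.
-/

namespace Finset

theorem one_add_sum_le_prod_one_add {ι R : Type*} [CommSemiring R] [PartialOrder R]
    [IsOrderedRing R] (s : Finset ι) {a : ι → R} (ha : ∀ i ∈ s, 0 ≤ a i) :
    1 + ∑ i ∈ s, a i ≤ ∏ i ∈ s, (1 + a i) := by
  classical
  induction s using Finset.induction_on with
  | empty => simp
  | insert i s hi ih =>
    rw [sum_insert hi, prod_insert hi]
    have hai : 0 ≤ a i := ha i (mem_insert_self i s)
    have hs : 0 ≤ ∑ j ∈ s, a j := sum_nonneg fun j hj => ha j (mem_insert_of_mem hj)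
    calc 1 + (a i + ∑ j ∈ s, a j)
        ≤ 1 + (a i + ∑ j ∈ s, a j) + a i * ∑ j ∈ s, a j :=
          le_add_of_nonneg_right (mul_nonneg hai hs)
      _ = (1 + a i) * (1 + ∑ j ∈ s, a j) := by ring
      _ ≤ (1 + a i) * ∏ j ∈ s, (1 + a j) :=
          mul_le_mul_of_nonneg_left (ih fun j hj => ha j (mem_insert_of_mem hj))
            (add_nonneg zero_le_one hai)

theorem eq_zero_of_prod_one_add_le_one_add_sum {ι : Type*} [DecidableEq ι] {s : Finset ι}
    {a : ι → ℕ} (h : ∏ i ∈ s, (1 + a i) ≤ 1 + ∑ i ∈ s, a i) {c : ι} (hc : c ∈ s)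
    (hac : a c ≠ 0) {i : ι} (hi : i ∈ s) (hic : i ≠ c) : a i = 0 := by
  rw [← mul_prod_erase s _ hc, ← add_sum_erase s _ hc] at h
  have hrest := Nat.mul_le_mul_left (1 + a c)
    (one_add_sum_le_prod_one_add (s.erase c) (a := a) fun _ _ => Nat.zero_le _)
  have hsum : ∑ j ∈ s.erase c, a j = 0 := by
    generalize ∑ j ∈ s.erase c, a j = S at h hrest
    generalize ∏ j ∈ s.erase c, (1 + a j) = P at h hrest
    nlinarith [Nat.pos_of_ne_zero hac]
  exact sum_eq_zero_iff.mp hsum i (mem_erase.mpr ⟨hic, hi⟩)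

end Finset

namespace Nat

theorem four_pow_pred_lt_self_pow {d : ℕ} (hd : 3 ≤ d) : 4 ^ (d - 1) < d ^ d := by
  obtain rfl | hd := hd.eq_or_lt
  · norm_num
  calc 4 ^ (d - 1) < 4 ^ d := Nat.pow_lt_pow_right (by norm_num) (by omega)
    _ ≤ d ^ d := Nat.pow_le_pow_left hd _

theorem four_pow_pred_le_self_pow (d : ℕ) : 4 ^ (d - 1) ≤ d ^ d := by
  rcases lt_or_ge d 3 with hd | hd
  · interval_cases d <;> norm_num
  · exact (four_pow_pred_lt_self_pow hd).le

end Nat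

namespace SimpleGraph

variable {V W : Type*}

section Degree

variable {G : SimpleGraph V} {G' : SimpleGraph W}

theorem Iso.mdeg_apply (e : G ≃g G') (v : V) : mdeg G' (e v) = mdeg G v :=
  (Nat.card_congr (e.mapNeighborSet v)).symm

variable [Fintype V] [Fintype W]

theorem mdeg_eq_degree (G : SimpleGraph V) [DecidableRel G.Adj] (v : V) :
    mdeg G v = G.degree v := by
  rw [mdeg, Nat.card_eq_fintype_card, card_neighborSet_eq_degree]

theorem mZ1_eq_sq_prod_degree (G : SimpleGraph V) [DecidableRel G.Adj] :
    mZ1 G = (∏ v, G.degree v) ^ 2 := by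
  simp only [mZ1, mdeg_eq_degree, Finset.prod_pow]

theorem mZ2_eq_prod_degree_pow (G : SimpleGraph V) [DecidableRel G.Adj] :
    mZ2 G = ∏ v, G.degree v ^ G.degree v := by
  simp only [mZ2, mdeg_eq_degree]

theorem Iso.mZ1_eq (e : G ≃g G') : mZ1 G = mZ1 G' :=
  Fintype.prod_equiv e.toEquiv _ _ fun v => by simp [e.mdeg_apply]

theorem Iso.mZ2_eq (e : G ≃g G') : mZ2 G = mZ2 G' :=
  Fintype.prod_equiv e.toEquiv _ _ fun v => by simp [e.mdeg_apply]

end Degree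

section Connected

variable [Fintype V] {G : SimpleGraph V} [DecidableRel G.Adj]

theorem Connected.card_sub_two_le_sum_degree_sub_one (hG : G.Connected) :
    Fintype.card V - 2 ≤ ∑ v, (G.degree v - 1) := by
  cases subsingleton_or_nontrivial V
  · have := Fintype.card_le_one_iff_subsingleton.mpr ‹_›
    omega
  have hpos (v : V) : 0 < G.degree v := hG.preconnected.degree_pos_of_nontrivial v
  have hsum : ∑ v, (G.degree v - 1) + Fintype.card V = ∑ v, G.degree v := by
    rw [← Finset.card_univ, Finset.card_eq_sum_ones, ← Finset.sum_add_distrib]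
    exact Finset.sum_congr rfl fun v _ => Nat.sub_add_cancel (hpos v)
  have hedges := hG.card_vert_le_card_edgeSet_add_one
  rw [Nat.card_eq_fintype_card, Nat.card_eq_fintype_card, ← edgeFinset_card] at hedges
  have := G.sum_degrees_eq_twice_card_edges
  omega

theorem Connected.card_sub_one_le_prod_degree (hG : G.Connected) :
    Fintype.card V - 1 ≤ ∏ v, G.degree v := by
  cases subsingleton_or_nontrivial V
  · have := Fintype.card_le_one_iff_subsingleton.mpr ‹_›
    omega
  have hpos (v : V) : 0 < G.degree v := hG.preconnected.degree_pos_of_nontrivial v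
  calc Fintype.card V - 1 ≤ 1 + ∑ v, (G.degree v - 1) := by
        have := hG.card_sub_two_le_sum_degree_sub_one
        omega
    _ ≤ ∏ v, (1 + (G.degree v - 1)) :=
        Finset.one_add_sum_le_prod_one_add _ fun _ _ => Nat.zero_le _
    _ = ∏ v, G.degree v := Finset.prod_congr rfl fun v _ => by have := hpos v; omega

theorem Connected.four_pow_card_sub_two_le_prod_degree_pow (hG : G.Connected) :
    4 ^ (Fintype.card V - 2) ≤ ∏ v, G.degree v ^ G.degree v :=
  calc 4 ^ (Fintype.card V - 2) ≤ 4 ^ ∑ v, (G.degree v - 1) :=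
        Nat.pow_le_pow_right (by norm_num) hG.card_sub_two_le_sum_degree_sub_one
    _ = ∏ v, 4 ^ (G.degree v - 1) := Finset.prod_pow_eq_pow_sum _ _ _ |>.symm
    _ ≤ ∏ v, G.degree v ^ G.degree v :=
        Finset.prod_le_prod' fun v _ => Nat.four_pow_pred_le_self_pow _

end Connected

section Star

theorem eq_starGraph_of_isUniversal [Fintype V] {G : SimpleGraph V} [DecidableRel G.Adj] {c : V}
    (hc : G.IsUniversal c) (hleaf : ∀ v, v ≠ c → G.degree v = 1) : G = starGraph c := by
  ext u v
  rw [starGraph_adj]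
  refine ⟨fun h => ⟨h.ne, ?_⟩, ?_⟩
  · by_contra! huv
    obtain ⟨w, -, hw⟩ := degree_eq_one_iff_existsUnique_adj.mp (hleaf u huv.1)
    exact huv.2 ((hw v h).trans (hw c (hc huv.1.symm).symm).symm)
  · rintro ⟨hne, rfl | rfl⟩
    · exact hc hne
    · exact (hc hne.symm).symm

theorem nonempty_iso_starGraph [DecidableEq V] (c c' : V) :
    Nonempty (starGraph c ≃g starGraph c') :=
  ⟨{ toEquiv := Equiv.swap c c'
     map_rel_iff' := by
       intro u v
       simp [Equiv.swap_apply_eq_iff] }⟩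

theorem starGraphFin_eq_starGraph (n : ℕ) [NeZero n] : starGraphFin n = starGraph 0 := by
  ext u v
  simp [starGraphFin, starGraph]

theorem mZ1_starGraphFin (n : ℕ) [NeZero n] : mZ1 (starGraphFin n) = (n - 1) ^ 2 := by
  rw [starGraphFin_eq_starGraph, mZ1_eq_sq_prod_degree,
    Finset.prod_eq_single 0 (fun v _ hv => degree_starGraph_of_ne_center hv) (by simp),
    degree_starGraph_center, Fintype.card_fin]

theorem Connected.exists_eq_starGraph_of_prod_degree_eq [Fintype V] {G : SimpleGraph V}
    [DecidableRel G.Adj] (hG : G.Connected) (hV : 3 ≤ Fintype.card V)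
    (h : ∏ v, G.degree v = Fintype.card V - 1) : ∃ c, G = starGraph c := by
  classical
  have : Nontrivial V := Fintype.one_lt_card_iff_nontrivial.mp (by omega)
  have hpos (v : V) : 0 < G.degree v := hG.preconnected.degree_pos_of_nontrivial v
  have hprod : ∏ v, G.degree v = ∏ v, (1 + (G.degree v - 1)) :=
    Finset.prod_congr rfl fun v _ => by have := hpos v; omega
  have hsum := hG.card_sub_two_le_sum_degree_sub_one
  obtain ⟨c, hc⟩ : ∃ c, G.degree c - 1 ≠ 0 := by
    by_contra! h0
    simp only [h0, Finset.sum_const_zero] at hsum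
    omega
  have hleaf (v : V) (hv : v ≠ c) : G.degree v = 1 := by
    have := Finset.eq_zero_of_prod_one_add_le_one_add_sum (a := fun v => G.degree v - 1)
      (by rw [← hprod, h]; omega) (Finset.mem_univ c) hc (Finset.mem_univ v) hv
    have := hpos v
    omega
  refine ⟨c, eq_starGraph_of_isUniversal ?_ hleaf⟩
  rw [← degree_eq_card_sub_one, ← h, Finset.prod_eq_single c (fun v _ hv => hleaf v hv) (by simp)]

end Star

section Path

variable {G : SimpleGraph V}

theorem Connected.exists_adj_dist_add_one_eq (hG : G.Connected) (r : V) {u : V} (hu : u ≠ r) :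
    ∃ w, G.Adj u w ∧ G.dist r w + 1 = G.dist r u := by
  obtain ⟨p, hp⟩ := hG.exists_walk_length_eq_dist u r
  cases p with
  | nil => exact absurd rfl hu
  | @cons _ w _ huw q =>
    refine ⟨w, huw, ?_⟩
    have hq : G.dist w r ≤ q.length := dist_le q
    have htri : G.dist r u ≤ G.dist r w + G.dist w u := hG.dist_triangle
    rw [dist_eq_one_iff_adj.mpr huw.symm] at htri
    rw [Walk.length_cons] at hp
    rw [dist_comm] at hq hp
    omega

/-- A vertex at distance `d + 1` from `r` is a neighbour of the unique vertex at distance `d`,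
which has at most one neighbour farther from `r`. -/
theorem Connected.dist_injective_of_degree_le [Fintype V] [DecidableRel G.Adj]
    (hG : G.Connected) {r : V} (hr : G.degree r ≤ 1) (hdeg : ∀ v, G.degree v ≤ 2) :
    Function.Injective (G.dist r) := by
  suffices ∀ d u w, G.dist r u = d → G.dist r w = d → u = w from
    fun u w h => this _ u w rfl h.symm
  intro d
  induction d with
  | zero =>
    intro u w hu hw
    exact (hG.dist_eq_zero_iff.mp hu).symm.trans (hG.dist_eq_zero_iff.mp hw)
  | succ d ih =>
    intro u w hu hw
    have hne {x : V} (hx : G.dist r x = d + 1) : x ≠ r := by rintro rfl; simp at hx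
    obtain ⟨p, hup, hp⟩ := hG.exists_adj_dist_add_one_eq r (hne hu)
    obtain ⟨p', hwp, hp'⟩ := hG.exists_adj_dist_add_one_eq r (hne hw)
    obtain rfl : p = p' := ih p p' (by omega) (by omega)
    rcases eq_or_ne p r with rfl | hpr
    · rw [← card_neighborFinset_eq_degree] at hr
      exact Finset.card_le_one.mp hr u (by simpa using hup.symm) w (by simpa using hwp.symm)
    · obtain ⟨q, hpq, hq⟩ := hG.exists_adj_dist_add_one_eq r hpr
      by_contra huw
      have h3 : 2 < (G.neighborFinset p).card := Finset.two_lt_card.mpr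
        ⟨u, by simpa using hup.symm, w, by simpa using hwp.symm, q, by simpa using hpq, huw,
          by rintro rfl; omega, by rintro rfl; omega⟩
      exact (card_neighborFinset_eq_degree G p ▸ hdeg p).not_gt h3

theorem Connected.adj_of_dist_add_one_eq (hG : G.Connected) {r u w : V}
    (hinj : Function.Injective (G.dist r)) (h : G.dist r u + 1 = G.dist r w) : G.Adj u w := by
  have hw : w ≠ r := by rintro rfl; simp at h
  obtain ⟨p, hwp, hp⟩ := hG.exists_adj_dist_add_one_eq r hw
  obtain rfl : p = u := hinj (by omega)
  exact hwp.symm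

theorem Connected.adj_iff_dist_add_one_eq (hG : G.Connected) {r u w : V}
    (hinj : Function.Injective (G.dist r)) :
    G.Adj u w ↔ G.dist r u + 1 = G.dist r w ∨ G.dist r w + 1 = G.dist r u := by
  refine ⟨fun h => ?_, ?_⟩
  · have hne : G.dist r u ≠ G.dist r w := fun h' => h.ne (hinj h')
    have := h.diff_dist_adj (u := r)
    omega
  · rintro (h | h)
    · exact hG.adj_of_dist_add_one_eq hinj h
    · exact (hG.adj_of_dist_add_one_eq hinj h).symm

theorem Connected.nonempty_iso_pathGraph [Fintype V] [DecidableRel G.Adj] (hG : G.Connected)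
    {r : V} (hr : G.degree r ≤ 1) (hdeg : ∀ v, G.degree v ≤ 2) :
    Nonempty (G ≃g pathGraph (Fintype.card V)) := by
  have hinj := hG.dist_injective_of_degree_le hr hdeg
  have hlt (u : V) : G.dist r u < Fintype.card V := by
    obtain ⟨p, hp, hlen⟩ := hG.exists_path_of_dist r u
    exact hlen ▸ hp.length_lt
  let f (u : V) : Fin (Fintype.card V) := ⟨G.dist r u, hlt u⟩
  have hf : Function.Bijective f :=
    (Fintype.bijective_iff_injective_and_card f).mpr
      ⟨fun u w h => hinj (Fin.mk.inj_iff.mp h), Fintype.card_fin _ |>.symm⟩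
  refine ⟨{ toEquiv := .ofBijective f hf, map_rel_iff' := ?_ }⟩
  intro u w
  simp [f, pathGraph_adj, hG.adj_iff_dist_add_one_eq hinj]

theorem Connected.nonempty_iso_pathGraph_of_prod_degree_pow_eq [Fintype V] [DecidableRel G.Adj]
    (hG : G.Connected) (h : ∏ v, G.degree v ^ G.degree v = 4 ^ (Fintype.card V - 2)) :
    Nonempty (G ≃g pathGraph (Fintype.card V)) := by
  have hsum := hG.card_sub_two_le_sum_degree_sub_one
  have hle : ∏ v, 4 ^ (G.degree v - 1) ≤ 4 ^ (Fintype.card V - 2) :=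
    h ▸ Finset.prod_le_prod' fun v _ => Nat.four_pow_pred_le_self_pow _
  rw [Finset.prod_pow_eq_pow_sum, Nat.pow_le_pow_iff_right (by norm_num)] at hle
  have hdeg (v : V) : G.degree v ≤ 2 := by
    by_contra! hv
    refine (h ▸ Finset.prod_lt_prod (fun v _ => by positivity)
      (fun v _ => Nat.four_pow_pred_le_self_pow (G.degree v))
      ⟨v, Finset.mem_univ v, Nat.four_pow_pred_lt_self_pow hv⟩).not_ge ?_
    rw [Finset.prod_pow_eq_pow_sum]
    exact Nat.pow_le_pow_right (by norm_num) hsum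
  obtain ⟨r, hr⟩ : ∃ r, G.degree r ≤ 1 := by
    by_contra! h2
    have : Fintype.card V ≤ ∑ v, (G.degree v - 1) := by
      simpa using Finset.card_nsmul_le_sum Finset.univ (fun v => G.degree v - 1) 1
        fun v _ => by have := h2 v; omega
    have := hG.nonempty
    have := Fintype.card_pos (α := V)
    omega
  exact hG.nonempty_iso_pathGraph hr hdeg

open Classical in
theorem degree_pathGraph_le_one {n : ℕ} {v : Fin n} (hv : v.val = 0 ∨ v.val + 1 = n) :
    (pathGraph n).degree v ≤ 1 := by
  rw [← card_neighborFinset_eq_degree, Finset.card_le_one]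
  intro a ha b hb
  simp only [mem_neighborFinset, pathGraph_adj] at ha hb
  omega

open Classical in
theorem degree_pathGraph_eq_two {n : ℕ} {v : Fin n} (h0 : v.val ≠ 0) (hn : v.val + 1 ≠ n) :
    (pathGraph n).degree v = 2 := by
  rw [← card_neighborFinset_eq_degree, Finset.card_eq_two]
  refine ⟨⟨v - 1, by omega⟩, ⟨v + 1, by omega⟩, by simp [Fin.ext_iff], ?_⟩
  ext u
  simp only [mem_neighborFinset, pathGraph_adj, Finset.mem_insert, Finset.mem_singleton,
    Fin.ext_iff]
  omega

theorem mZ2_pathGraph {n : ℕ} (hn : 2 ≤ n) : mZ2 (pathGraph n) = 4 ^ (n - 2) := by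
  classical
  obtain ⟨m, rfl⟩ : ∃ m, n = m + 2 := ⟨n - 2, by omega⟩
  have hend {v : Fin (m + 2)} (hv : v.val = 0 ∨ v.val + 1 = m + 2) :
      (pathGraph (m + 2)).degree v ^ (pathGraph (m + 2)).degree v = 1 := by
    have := degree_pathGraph_le_one hv
    interval_cases (pathGraph (m + 2)).degree v <;> rfl
  rw [mZ2_eq_prod_degree_pow, Fin.prod_univ_succ, Fin.prod_univ_castSucc, hend (by simp),
    hend (by simp)]
  have hmid (i : Fin m) : (pathGraph (m + 2)).degree i.castSucc.succ ^
      (pathGraph (m + 2)).degree i.castSucc.succ = 4 := by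
    rw [degree_pathGraph_eq_two (by simp) (by simp; omega)]; rfl
  simp [hmid]

end Path

end SimpleGraph

theorem stmt5_general (n : ℕ) (hn : 3 ≤ n)
    (G : SimpleGraph (Fin n)) (hG : G.Connected) :
    ((n - 1) ^ 2 ≤ mZ1 G ∧ (mZ1 G = (n - 1) ^ 2 ↔ Nonempty (G ≃g starGraphFin n))) ∧
      (4 ^ (n - 2) ≤ mZ2 G ∧
        (mZ2 G = 4 ^ (n - 2) ↔ Nonempty (G ≃g SimpleGraph.pathGraph n))) := by
  classical
  have : NeZero n := ⟨by omega⟩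
  refine ⟨⟨?_, ⟨fun h => ?_, fun ⟨e⟩ => ?_⟩⟩, ?_, ⟨fun h => ?_, fun ⟨e⟩ => ?_⟩⟩
  · rw [mZ1_eq_sq_prod_degree]
    exact Nat.pow_le_pow_left (by simpa using hG.card_sub_one_le_prod_degree) 2
  · rw [mZ1_eq_sq_prod_degree, (Nat.pow_left_injective two_ne_zero).eq_iff] at h
    obtain ⟨c, rfl⟩ := hG.exists_eq_starGraph_of_prod_degree_eq
      (by rwa [Fintype.card_fin]) (by rwa [Fintype.card_fin])
    rw [starGraphFin_eq_starGraph]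
    exact nonempty_iso_starGraph c 0
  · rw [e.mZ1_eq, mZ1_starGraphFin]
  · rw [mZ2_eq_prod_degree_pow]
    simpa using hG.four_pow_card_sub_two_le_prod_degree_pow
  · rw [mZ2_eq_prod_degree_pow] at h
    have := hG.nonempty_iso_pathGraph_of_prod_degree_pow_eq (by simpa using h)
    rwa [Fintype.card_fin] at this
  · rw [e.mZ2_eq, mZ2_pathGraph (by omega)]

theorem stmt5 (n k : ℕ) (hn : 3 ≤ n) (hk1 : 1 ≤ k) (hk2 : k ≤ n - 1)
    (G : SimpleGraph (Fin n)) (hG : G.Connected) (hκ' : EdgeConnAtMost G k) :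
    ((n - 1) ^ 2 ≤ mZ1 G ∧ (mZ1 G = (n - 1) ^ 2 ↔ Nonempty (G ≃g starGraphFin n))) ∧
      (4 ^ (n - 2) ≤ mZ2 G ∧
        (mZ2 G = 4 ^ (n - 2) ↔ Nonempty (G ≃g SimpleGraph.pathGraph n))) :=
  stmt5_general n hn G hG
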